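/- Let δ ∈ (0,1] and let Φ(y) = e^{-2y}·p(1/y) where p is a real polynomial. Then there is a constant C₀ > 0 such that for all integers α ≥ 0, all integers m ≥ 1, and all y ≥ mδ, |d^α/dy^α Φ(y)| ≤ C₀^{α+1} α! δ^{-α} e^{-mδ/2} · m^{-α} (equivalently, the composed function x ↦ Φ(m x) satisfies sup_{x ≥ δ} |∂_x^α Φ(mx)| ≤ C₀^{α+1} α! δ^{-α} e^{-mδ/2}). -/

import Mathlib

open Metric Complex

private lemma aux_analytic (F : ℂ → ℂ) (hF : DifferentiableOn ℂ F {z : ℂ | z ≠ 0}) (n : ℕ) :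
    AnalyticOnNhd ℂ (iteratedDeriv n F) {z : ℂ | z ≠ 0} := by
  induction n with
  | zero => simpa [iteratedDeriv_zero] using hF.analyticOnNhd isOpen_ne
  | succ n ih => rw [iteratedDeriv_succ]; exact ih.deriv

private lemma aux_re (f : ℝ → ℝ) (F : ℂ → ℂ) (hF : DifferentiableOn ℂ F {z : ℂ | z ≠ 0})
    (hco : ∀ t : ℝ, t ≠ 0 → F ↑t = ↑(f t)) (n : ℕ) :
    ∀ t : ℝ, 0 < t → iteratedDeriv n f t = (iteratedDeriv n F ↑t).re := by
  induction n with
  | zero =>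
    intro t ht
    simp [iteratedDeriv_zero, hco t ht.ne']
  | succ n ih =>
    intro t ht
    rw [iteratedDeriv_succ, iteratedDeriv_succ]
    have hev : iteratedDeriv n f =ᶠ[nhds t] fun s : ℝ => (iteratedDeriv n F ↑s).re := by
      filter_upwards [Ioi_mem_nhds ht] with s hs using ih s hs
    rw [hev.deriv_eq]
    have hzt : (↑t : ℂ) ∈ {z : ℂ | z ≠ 0} := by
      simp only [Set.mem_setOf_eq, ne_eq, Complex.ofReal_eq_zero]
      exact ht.ne'
    have hd : HasDerivAt (iteratedDeriv n F) (deriv (iteratedDeriv n F) ↑t) ↑t :=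
      ((aux_analytic F hF n ↑t hzt).differentiableAt).hasDerivAt
    exact hd.real_of_complex.deriv

/-- For `δ ∈ (0,1]` and `Φ(y) = e^{-2y} p(1/y)` with `p` a real polynomial, there is
`C₀ > 0` such that for all `α ≥ 0`, `m ≥ 1` and `x ≥ δ`,
`|∂_x^α Φ(mx)| ≤ C₀^{α+1} α! δ^{-α} e^{-mδ/2}`. -/
theorem stmt_13 (δ : ℝ) (hδ0 : 0 < δ) (hδ1 : δ ≤ 1) (p : Polynomial ℝ) :
    ∃ C₀ : ℝ, 0 < C₀ ∧ ∀ (α : ℕ) (m : ℕ), 1 ≤ m → ∀ x : ℝ, δ ≤ x →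
      |iteratedDeriv α
          (fun t : ℝ => Real.exp (-2 * ((m : ℝ) * t)) * p.eval (1 / ((m : ℝ) * t))) x| ≤
        C₀ ^ (α + 1) * (α.factorial : ℝ) / δ ^ α * Real.exp (-(m : ℝ) * δ / 2) := by
  classical
  set q : Polynomial ℂ := p.map (algebraMap ℝ ℂ) with hq
  set Cp : ℝ := ∑ k ∈ Finset.range (p.natDegree + 1), |p.coeff k| * (2 / δ) ^ k with hCp
  have hCp0 : 0 ≤ Cp := by
    apply Finset.sum_nonneg
    intro k _
    positivity
  refine ⟨max Cp 2, lt_of_lt_of_le two_pos (le_max_right _ _), ?_⟩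
  set C₀ : ℝ := max Cp 2 with hC₀
  have hC₀2 : (2 : ℝ) ≤ C₀ := le_max_right _ _
  have hC₀Cp : Cp ≤ C₀ := le_max_left _ _
  intro α m hm x hx
  have hx0 : 0 < x := lt_of_lt_of_le hδ0 hx
  have hm1 : (1 : ℝ) ≤ (m : ℝ) := by exact_mod_cast hm
  have hmC : ((m : ℂ)) ≠ 0 := by
    simp only [ne_eq, Nat.cast_eq_zero]; omega
  -- the complex extension
  set F : ℂ → ℂ := fun z => Complex.exp (-2 * ((m : ℂ) * z)) * q.eval (1 / ((m : ℂ) * z)) with hFdef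
  set f : ℝ → ℝ := fun t : ℝ => Real.exp (-2 * ((m : ℝ) * t)) * p.eval (1 / ((m : ℝ) * t)) with hfdef
  have hF : DifferentiableOn ℂ F {z : ℂ | z ≠ 0} := by
    intro z hz
    apply DifferentiableAt.differentiableWithinAt
    have hz0 : (m : ℂ) * z ≠ 0 := mul_ne_zero hmC hz
    have h1 : DifferentiableAt ℂ (fun z : ℂ => 1 / ((m : ℂ) * z)) z :=
      (differentiableAt_const 1).div ((differentiableAt_fun_id.const_mul _)) hz0
    exact ((differentiableAt_fun_id.const_mul ((m : ℂ))).const_mul (-2)).cexp.mul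
      ((q.differentiableAt).comp z h1)
  have hco : ∀ t : ℝ, t ≠ 0 → F ↑t = ↑(f t) := by
    intro t ht
    simp only [hFdef, hfdef, hq]
    push_cast
    congr 1
    have h1 : ((1 : ℂ) / ((m : ℂ) * (t : ℂ))) = algebraMap ℝ ℂ (1 / ((m : ℝ) * t)) := by
      simp only [Complex.coe_algebraMap]
      push_cast
      ring
    rw [h1, Polynomial.eval_map, Polynomial.eval₂_at_apply]
    simp
  -- the key bound on the circle
  set B : ℝ := Cp * Real.exp (-(m : ℝ) * δ) with hB
  have hB0 : 0 ≤ B := mul_nonneg hCp0 (Real.exp_pos _).le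
  have hball : ∀ z : ℂ, z ∈ Metric.sphere (↑x : ℂ) (δ / 2) → ‖F z‖ ≤ B := by
    intro z hzsph
    have hdist : ‖z - ↑x‖ = δ / 2 := by
      rwa [mem_sphere_iff_norm] at hzsph
    have hre1 : |z.re - x| ≤ δ / 2 := by
      have := Complex.abs_re_le_norm (z - ↑x)
      simpa [Complex.sub_re, hdist] using this.trans_eq hdist
    have hre : x - δ / 2 ≤ z.re := by
      have := abs_le.mp hre1
      linarith [this.1]
    have hre2 : δ / 2 ≤ z.re := by linarith
    have hzn : δ / 2 ≤ ‖z‖ := le_trans hre2 (le_trans (Complex.re_le_norm z) (le_of_eq rfl))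
    have hmzn : δ / 2 ≤ ‖(m : ℂ) * z‖ := by
      rw [norm_mul]
      have : ‖(m : ℂ)‖ = (m : ℝ) := by
        simp
      rw [this]
      calc δ / 2 ≤ ‖z‖ := hzn
        _ = 1 * ‖z‖ := by ring
        _ ≤ (m : ℝ) * ‖z‖ := by
            apply mul_le_mul_of_nonneg_right hm1 (norm_nonneg _)
    have hw : ‖(1 : ℂ) / ((m : ℂ) * z)‖ ≤ 2 / δ := by
      rw [norm_div, norm_one]
      rw [div_le_div_iff₀ (lt_of_lt_of_le (by positivity) hmzn) hδ0]
      calc 1 * δ = 2 * (δ / 2) := by ring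
        _ ≤ 2 * ‖(m : ℂ) * z‖ := by linarith
    have hpoly : ‖q.eval (1 / ((m : ℂ) * z))‖ ≤ Cp := by
      set w : ℂ := 1 / ((m : ℂ) * z) with hwdef
      have hlt : q.natDegree < p.natDegree + 1 :=
        Nat.lt_succ_of_le Polynomial.natDegree_map_le
      rw [Polynomial.eval_eq_sum_range' hlt]
      refine le_trans (norm_sum_le _ _) ?_
      apply Finset.sum_le_sum
      intro k _
      rw [norm_mul, norm_pow]
      have hcoef : ‖q.coeff k‖ = |p.coeff k| := by
        simp [hq, Polynomial.coeff_map]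
      rw [hcoef]
      apply mul_le_mul_of_nonneg_left _ (abs_nonneg _)
      exact pow_le_pow_left₀ (norm_nonneg _) hw k
    have hexp : ‖Complex.exp (-2 * ((m : ℂ) * z))‖ ≤ Real.exp (-(m : ℝ) * δ) := by
      rw [Complex.norm_exp]
      apply Real.exp_le_exp.mpr
      have hre' : (-2 * ((m : ℂ) * z)).re = -2 * ((m : ℝ) * z.re) := by
        simp [Complex.mul_re]
      rw [hre']
      nlinarith [hre, hx, hδ0, hm1]
    calc ‖F z‖ = ‖Complex.exp (-2 * ((m : ℂ) * z))‖ * ‖q.eval (1 / ((m : ℂ) * z))‖ := by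
          rw [hFdef]; exact norm_mul _ _
      _ ≤ Real.exp (-(m : ℝ) * δ) * Cp := by
          apply mul_le_mul hexp hpoly (norm_nonneg _) (Real.exp_pos _).le
      _ = B := by rw [hB]; ring
  -- power series on closed ball
  have hRpos : (0 : ℝ) < δ / 2 := by positivity
  set R : NNReal := ⟨δ / 2, hRpos.le⟩ with hR
  have hRpos' : (0 : NNReal) < R := by
    rw [← NNReal.coe_lt_coe]; exact hRpos
  have hsub : Metric.closedBall (↑x : ℂ) (↑R : ℝ) ⊆ {z : ℂ | z ≠ 0} := by
    intro z hzball
    simp only [Metric.mem_closedBall, Complex.dist_eq] at hzball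
    have hRr : (↑R : ℝ) = δ / 2 := rfl
    rw [hRr] at hzball
    have hre1 : |z.re - x| ≤ δ / 2 := by
      calc |z.re - x| = |(z - ↑x).re| := by simp [Complex.sub_re]
        _ ≤ ‖z - ↑x‖ := Complex.abs_re_le_norm _
        _ ≤ δ / 2 := hzball
    have : δ / 2 ≤ z.re := by
      have := abs_le.mp hre1
      linarith [this.1]
    intro h0
    rw [h0] at this
    simp at this
    linarith
  have hps : HasFPowerSeriesOnBall F (cauchyPowerSeries F ↑x (↑R : ℝ)) ↑x R :=
    (hF.mono hsub).hasFPowerSeriesOnBall hRpos'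
  -- iterated derivative identity
  have hiter : iteratedDeriv α F ↑x
      = α.factorial • (cauchyPowerSeries F ↑x (↑R : ℝ) α fun _ => (1 : ℂ)) := by
    rw [iteratedDeriv_eq_iteratedFDeriv, hps.factorial_smul 1]
  -- bound the coefficient
  have hcoeff : ‖cauchyPowerSeries F ↑x (↑R : ℝ) α‖ ≤ B * (2 / δ) ^ α := by
    have h1 := norm_cauchyPowerSeries_le F ↑x (↑R : ℝ) α
    have hRr : (↑R : ℝ) = δ / 2 := rfl
    have hInt : (∫ θ : ℝ in (0)..2 * Real.pi, ‖F (circleMap ↑x (↑R : ℝ) θ)‖) ≤ 2 * Real.pi * B := by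
      have h2 : ‖∫ θ : ℝ in (0)..2 * Real.pi, ‖F (circleMap ↑x (↑R : ℝ) θ)‖‖
          ≤ B * |2 * Real.pi - 0| := by
        apply intervalIntegral.norm_integral_le_of_norm_le_const
        intro θ _
        rw [Real.norm_eq_abs, _root_.abs_of_nonneg (norm_nonneg _)]
        apply hball
        rw [hRr]
        exact circleMap_mem_sphere _ hRpos.le _
      calc (∫ θ : ℝ in (0)..2 * Real.pi, ‖F (circleMap ↑x (↑R : ℝ) θ)‖)
          ≤ ‖∫ θ : ℝ in (0)..2 * Real.pi, ‖F (circleMap ↑x (↑R : ℝ) θ)‖‖ := le_abs_self _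
        _ ≤ B * |2 * Real.pi - 0| := h2
        _ = 2 * Real.pi * B := by
            rw [sub_zero, _root_.abs_of_nonneg (by positivity : (0:ℝ) ≤ 2 * Real.pi)]
            ring
    have hpi : (0 : ℝ) < 2 * Real.pi := by positivity
    calc ‖cauchyPowerSeries F ↑x (↑R : ℝ) α‖
        ≤ ((2 * Real.pi)⁻¹ * ∫ θ : ℝ in (0)..2 * Real.pi, ‖F (circleMap ↑x (↑R : ℝ) θ)‖)
          * |(↑R : ℝ)|⁻¹ ^ α := h1
      _ ≤ ((2 * Real.pi)⁻¹ * (2 * Real.pi * B)) * |(↑R : ℝ)|⁻¹ ^ α := by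
          apply mul_le_mul_of_nonneg_right _ (by positivity)
          apply mul_le_mul_of_nonneg_left hInt (by positivity)
      _ = B * |(↑R : ℝ)|⁻¹ ^ α := by
          field_simp
      _ = B * (2 / δ) ^ α := by
          rw [hRr, _root_.abs_of_nonneg hRpos.le]
          congr 1
          rw [inv_div]
  -- assemble
  have hlink : iteratedDeriv α f x = (iteratedDeriv α F ↑x).re :=
    aux_re f F hF hco α x hx0
  have hnorm : |iteratedDeriv α f x| ≤ (α.factorial : ℝ) * (B * (2 / δ) ^ α) := by
    rw [hlink]
    calc |(iteratedDeriv α F ↑x).re| ≤ ‖iteratedDeriv α F ↑x‖ := Complex.abs_re_le_norm _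
      _ = (α.factorial : ℝ) * ‖cauchyPowerSeries F ↑x (↑R : ℝ) α fun _ => (1 : ℂ)‖ := by
          rw [hiter, nsmul_eq_mul, norm_mul]
          simp
      _ ≤ (α.factorial : ℝ) * ‖cauchyPowerSeries F ↑x (↑R : ℝ) α‖ := by
          apply mul_le_mul_of_nonneg_left _ (by positivity)
          have := (cauchyPowerSeries F ↑x (↑R : ℝ) α).le_opNorm (fun _ => (1 : ℂ))
          simpa using this
      _ ≤ (α.factorial : ℝ) * (B * (2 / δ) ^ α) := by
          apply mul_le_mul_of_nonneg_left hcoeff (by positivity)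
  refine hnorm.trans ?_
  have hmδ : 0 ≤ (m : ℝ) * δ := by positivity
  have hexpmono : Real.exp (-(m : ℝ) * δ) ≤ Real.exp (-(m : ℝ) * δ / 2) :=
    Real.exp_le_exp.mpr (by linarith)
  calc (α.factorial : ℝ) * (B * (2 / δ) ^ α)
      = (Cp * 2 ^ α) * (α.factorial : ℝ) * Real.exp (-(m : ℝ) * δ) / δ ^ α := by
        rw [hB, div_pow]
        field_simp
    _ ≤ (C₀ * C₀ ^ α) * (α.factorial : ℝ) * Real.exp (-(m : ℝ) * δ / 2) / δ ^ α := by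
        apply div_le_div_of_nonneg_right _ (by positivity)
        case _ =>
          apply mul_le_mul _ hexpmono (Real.exp_pos _).le (by positivity)
          apply mul_le_mul_of_nonneg_right _ (by positivity)
          exact mul_le_mul hC₀Cp (pow_le_pow_left₀ (by norm_num) hC₀2 α) (by positivity)
            (le_trans (by norm_num) hC₀2)
    _ = C₀ ^ (α + 1) * (α.factorial : ℝ) / δ ^ α * Real.exp (-(m : ℝ) * δ / 2) := by
        rw [pow_succ]
        ring
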